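/- arXiv:2206.08529 — 3 statements merged into one kernel-verified Lean document; each statement's English description precedes it below -/
import Mathlib

section
/- Upper bound of the error term (Theorem 2). Let M ≥ 2, U = {1,…,M}, let i ≠ j be two features in U, let f : ℝ^M → ℝ be twice continuously differentiable, and let x, x̄ ∈ ℝ^M be the input and reference points. Define the error term Δ_{i,j} = (x_i − x̄_i)(x_j − x̄_j) · Σ_{S ⊆ U∖{i,j}} [∇²_{i,j} f_v(S ∪ {i,j}) + ∇²_{j,i} f_v(S ∪ {i,j})] / (2 (M − |S| − 1) C(M, |S|+1)), and define ε_{i,j} = max over all V ⊆ U∖{i,j} of (1/4)·|∇²_{i,j} f_v(U∖V) + ∇²_{j,i} f_v(U∖V)|. Then |Δ_{i,j}| ≤ ε_{i,j} · |x_i − x̄_i| · |x_j − x̄_j| (so that, up to the higher-order term o_{i,j} of the Shapley chain rule, |φ_i(f_v, U) − φ_i(f_v, U∖{j})| ≤ ε_{i,j} · |x_i − x̄_i| · |x_j − x̄_j|). -/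
set_option maxHeartbeats 800000


open Finset

/-- The cross-gradient `∇²_{i,j} f(p) = ∂²f/∂xᵢ∂xⱼ` of `f : ℝ^M → ℝ` at the point `p`. -/
noncomputable def crossGrad {M : ℕ} (f : (Fin M → ℝ) → ℝ) (i j : Fin M)
    (p : Fin M → ℝ) : ℝ :=
  deriv (fun s => deriv (fun t => f (Function.update (Function.update p j s) i t)) (p i))
    (p j)

/-- The masked point `z^S` built from input `x` and reference `x̄`:
`z^S_k = x_k` for `k ∈ S` and `z^S_k = x̄_k` for `k ∉ S`. -/
def zpt {M : ℕ} (x xbar : Fin M → ℝ) (S : Finset (Fin M)) : Fin M → ℝ :=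
  fun k => if k ∈ S then x k else xbar k

/-- The error term `Δ_{i,j}` of the Shapley chain rule:
`Δ_{i,j} = (xᵢ − x̄ᵢ)(xⱼ − x̄ⱼ) · Σ_{S ⊆ U∖{i,j}}
  (∇²_{i,j} f_v(S ∪ {i,j}) + ∇²_{j,i} f_v(S ∪ {i,j})) / (2(M − |S| − 1) C(M, |S|+1))`,
where `∇²_{i,j} f_v(S)` is the cross-gradient of `f` at the masked point `z^S`. -/
noncomputable def errTerm {M : ℕ} (f : (Fin M → ℝ) → ℝ) (i j : Fin M)
    (x xbar : Fin M → ℝ) : ℝ :=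
  (x i - xbar i) * (x j - xbar j) *
    ∑ S ∈ ((Finset.univ.erase i).erase j).powerset,
      (crossGrad f i j (zpt x xbar (insert i (insert j S)))
          + crossGrad f j i (zpt x xbar (insert i (insert j S)))) /
        (2 * ((M : ℝ) - S.card - 1) * (M.choose (S.card + 1) : ℝ))

lemma nat_id (n k : ℕ) : (k+1)*(n+1-k)*((n+2).choose (k+1)) = (n+2)*(n+1)*(n.choose k) := by
  calc (k+1)*(n+1-k)*((n+2).choose (k+1))
      = (n+1-k) * ((n+2).choose (k+1) * (k+1)) := by ring
    _ = (n+1-k) * ((n+2) * ((n+1).choose k)) := by rw [← Nat.add_one_mul_choose_eq]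
    _ = (n+2) * ((n+1).choose (k+1) * (k+1)) := by rw [Nat.choose_succ_right_eq]; ring
    _ = (n+2) * ((n+1) * n.choose k) := by rw [← Nat.add_one_mul_choose_eq]
    _ = (n+2)*(n+1)*(n.choose k) := by ring

lemma real_id (n k : ℕ) (hk : k ≤ n) :
    (n.choose k : ℝ) * ((1:ℝ) / (2 * (((n:ℝ)+2) - k - 1) * (((n+2).choose (k+1) : ℕ) : ℝ)))
      = ((k:ℝ)+1)/(2*((n:ℝ)+1)*((n:ℝ)+2)) := by
  have key : ((k:ℝ)+1) * ((n+1-k : ℕ):ℝ) * (((n+2).choose (k+1) : ℕ):ℝ)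
      = ((n:ℝ)+2)*((n:ℝ)+1)*(n.choose k : ℝ) := by exact_mod_cast nat_id n k
  have hcast : ((n:ℝ)+2) - k - 1 = ((n+1-k : ℕ) : ℝ) := by
    rw [Nat.cast_sub (by omega)]; push_cast; ring
  have h1 : ((n+1-k : ℕ):ℝ) ≠ 0 := Nat.cast_ne_zero.2 (by omega)
  have h2 : (((n+2).choose (k+1) : ℕ):ℝ) ≠ 0 :=
    Nat.cast_ne_zero.2 (Nat.choose_pos (by omega)).ne'
  have h3 : ((n:ℝ)+1) ≠ 0 := by positivity
  have h4 : ((n:ℝ)+2) ≠ 0 := by positivity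
  rw [hcast]
  field_simp
  nlinarith [key]

lemma gauss (n : ℕ) : ∑ k ∈ Finset.range (n+1), ((k:ℝ)+1) = ((n:ℝ)+1)*((n:ℝ)+2)/2 := by
  induction n with
  | zero => simp
  | succ m ih => rw [Finset.sum_range_succ, ih]; push_cast; ring

lemma weight_sum' {α : Type*} [DecidableEq α] (n : ℕ) (T : Finset α) (hT : T.card = n) :
    ∑ S ∈ T.powerset, (1:ℝ) / (2 * (((n:ℝ)+2) - S.card - 1) * (((n+2).choose (S.card + 1) : ℕ) : ℝ))
      = 1/4 := by
  rw [Finset.sum_powerset]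
  have h1 : ∀ k ∈ Finset.range (T.card + 1),
      (∑ S ∈ T.powersetCard k, (1:ℝ) / (2 * (((n:ℝ)+2) - S.card - 1) * (((n+2).choose (S.card + 1) : ℕ) : ℝ)))
      = ((k:ℝ)+1)/(2*((n:ℝ)+1)*((n:ℝ)+2)) := by
    intro k hk
    have hk' : k ≤ n := by rw [Finset.mem_range, hT] at hk; omega
    have hcg : ∀ S ∈ T.powersetCard k, (1:ℝ) / (2 * (((n:ℝ)+2) - S.card - 1) * (((n+2).choose (S.card + 1) : ℕ) : ℝ))
        = (1:ℝ) / (2 * (((n:ℝ)+2) - k - 1) * (((n+2).choose (k + 1) : ℕ) : ℝ)) := by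
      intro S hS
      rw [(Finset.mem_powersetCard.1 hS).2]
    rw [Finset.sum_congr rfl hcg, Finset.sum_const, Finset.card_powersetCard, hT, nsmul_eq_mul]
    exact real_id n k hk'
  rw [Finset.sum_congr rfl h1, ← Finset.sum_div, hT, gauss]
  have h3 : ((n:ℝ)+1) ≠ 0 := by positivity
  have h4 : ((n:ℝ)+2) ≠ 0 := by positivity
  field_simp
  ring

lemma weight_sum {α : Type*} [DecidableEq α] (n : ℕ) (T : Finset α) (hT : T.card = n) :
    ∑ S ∈ T.powerset, (1:ℝ) / (2 * (((n+2 : ℕ) : ℝ) - S.card - 1) * (((n+2).choose (S.card + 1) : ℕ) : ℝ))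
      = 1/4 := by
  have := weight_sum' n T hT
  push_cast at this ⊢
  exact this

lemma abs_sum_div_le {α : Type*} (P : Finset α) (g D : α → ℝ) (ε : ℝ)
    (hD : ∀ S ∈ P, 0 < D S) (hg : ∀ S ∈ P, |g S| ≤ 4 * ε)
    (hw : ∑ S ∈ P, 1 / D S = 1/4) :
    |∑ S ∈ P, g S / D S| ≤ ε := by
  calc |∑ S ∈ P, g S / D S| ≤ ∑ S ∈ P, |g S / D S| := Finset.abs_sum_le_sum_abs _ _
    _ ≤ ∑ S ∈ P, (4*ε) * (1 / D S) := by
        refine Finset.sum_le_sum fun S hS => ?_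
        rw [abs_div, abs_of_pos (hD S hS), div_eq_mul_one_div]
        exact mul_le_mul_of_nonneg_right (hg S hS) (le_of_lt (one_div_pos.2 (hD S hS)))
    _ = (4*ε) * ∑ S ∈ P, 1 / D S := (Finset.mul_sum _ _ _).symm
    _ = ε := by rw [hw]; ring

/-- Upper bound of the error term (Theorem 2): `|Δ_{i,j}| ≤ ε_{i,j} |xᵢ − x̄ᵢ| |xⱼ − x̄ⱼ|`,
where `ε_{i,j} = max_{V ⊆ U∖{i,j}} ¼ |∇²_{i,j} f_v(U∖V) + ∇²_{j,i} f_v(U∖V)|`, so that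
(up to the higher-order term of the Shapley chain rule)
`|φᵢ(f_v, U) − φᵢ(f_v, U∖{j})| ≤ ε_{i,j} |xᵢ − x̄ᵢ| |xⱼ − x̄ⱼ|`. -/
theorem error_term_upper_bound (M : ℕ) (hM : 2 ≤ M) (i j : Fin M) (hij : i ≠ j)
    (f : (Fin M → ℝ) → ℝ) (hf : ContDiff ℝ 2 f) (x xbar : Fin M → ℝ) :
    |errTerm f i j x xbar| ≤
      (((Finset.univ.erase i).erase j).powerset).sup'
          (Finset.powerset_nonempty _)
          (fun V => (1 / 4) * |crossGrad f i j (zpt x xbar (Finset.univ \ V))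
            + crossGrad f j i (zpt x xbar (Finset.univ \ V))|)
        * |x i - xbar i| * |x j - xbar j| := by
  obtain ⟨n, rfl⟩ : ∃ n, M = n + 2 := ⟨M - 2, by omega⟩
  set T := ((Finset.univ : Finset (Fin (n+2))).erase i).erase j with hTdef
  clear_value T
  have hTcard : T.card = n := by
    rw [hTdef, Finset.card_erase_of_mem (Finset.mem_erase.2 ⟨hij.symm, Finset.mem_univ j⟩),
      Finset.card_erase_of_mem (Finset.mem_univ i), Finset.card_univ, Fintype.card_fin]
    omega
  set ε := T.powerset.sup' (Finset.powerset_nonempty _)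
      (fun V => (1 / 4) * |crossGrad f i j (zpt x xbar (Finset.univ \ V))
        + crossGrad f j i (zpt x xbar (Finset.univ \ V))|) with hεdef
  clear_value ε
  have hbound : ∀ S ∈ T.powerset,
      |crossGrad f i j (zpt x xbar (insert i (insert j S)))
        + crossGrad f j i (zpt x xbar (insert i (insert j S)))| ≤ 4 * ε := by
    intro S hS
    have hS' := Finset.mem_powerset.1 hS
    have hVmem : T \ S ∈ T.powerset := Finset.mem_powerset.2 (Finset.sdiff_subset)
    have hset : Finset.univ \ (T \ S) = insert i (insert j S) := by
      ext k
      have hk := @hS' k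
      simp only [hTdef, Finset.mem_sdiff, Finset.mem_univ, Finset.mem_erase,
        Finset.mem_insert, true_and, not_and, not_not] at hk ⊢
      by_cases hki : k = i <;> by_cases hkj : k = j <;> tauto
    have hle := Finset.le_sup' (fun V => (1 / 4) * |crossGrad f i j (zpt x xbar (Finset.univ \ V))
        + crossGrad f j i (zpt x xbar (Finset.univ \ V))|) hVmem
    rw [hset, ← hεdef] at hle
    linarith
  have hD : ∀ S ∈ T.powerset,
      (0:ℝ) < 2 * (((n+2:ℕ) : ℝ) - S.card - 1) * (((n+2).choose (S.card + 1) : ℕ) : ℝ) := by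
    intro S hS
    have hc : S.card ≤ n := by
      have h := Finset.card_le_card (Finset.mem_powerset.1 hS)
      omega
    have h1 : (0:ℝ) < ((n+2:ℕ):ℝ) - S.card - 1 := by
      have : (S.card : ℝ) ≤ n := by exact_mod_cast hc
      push_cast; linarith
    have h2 : (0:ℝ) < (((n+2).choose (S.card + 1) : ℕ):ℝ) := by
      exact_mod_cast Nat.choose_pos (by omega)
    positivity
  have hsum := abs_sum_div_le T.powerset
    (fun S => crossGrad f i j (zpt x xbar (insert i (insert j S)))
        + crossGrad f j i (zpt x xbar (insert i (insert j S))))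
    (fun S => 2 * (((n+2:ℕ) : ℝ) - S.card - 1) * (((n+2).choose (S.card + 1) : ℕ) : ℝ))
    ε hD hbound (weight_sum n T hTcard)
  have herr : |errTerm f i j x xbar| = |x i - xbar i| * |x j - xbar j| *
      |∑ S ∈ T.powerset,
        (crossGrad f i j (zpt x xbar (insert i (insert j S)))
          + crossGrad f j i (zpt x xbar (insert i (insert j S)))) /
          (2 * (((n+2:ℕ) : ℝ) - S.card - 1) * (((n+2).choose (S.card + 1) : ℕ) : ℝ))| := by
    rw [errTerm, ← hTdef, abs_mul, abs_mul]
  rw [herr]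
  calc |x i - xbar i| * |x j - xbar j| * _ ≤ |x i - xbar i| * |x j - xbar j| * ε :=
      mul_le_mul_of_nonneg_left hsum (by positivity)
    _ = ε * |x i - xbar i| * |x j - xbar j| := by ring
end

section
/- Exact discrete Shapley chain rule. Let U be a finite set with |U| = M ≥ 2, let v be any value function on subsets of U, and let i ≠ j be elements of U. Then φ_i(v, U) − φ_i(v, U∖{j}) = (1/M) · Σ_{S ⊆ U∖{i,j}} C(M−1, |S|+1)⁻¹ · [v(S ∪ {i,j}) − v(S ∪ {j}) − v(S ∪ {i}) + v(S)]. -/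
open Finset

/-- The Shapley value of feature `i` in the cooperative game with value function `v`
restricted to the coalition `T`:
`φ_i(v, T) = (1/|T|) · Σ_{S ⊆ T∖{i}} C(|T|−1, |S|)⁻¹ · (v (S ∪ {i}) − v S)`. -/
noncomputable def shapley {α : Type*} [DecidableEq α] (v : Finset α → ℝ) (T : Finset α)
    (i : α) : ℝ :=
  (T.card : ℝ)⁻¹ * ∑ S ∈ (T.erase i).powerset,
    ((T.card - 1).choose S.card : ℝ)⁻¹ * (v (insert i S) - v S)

/-- Reciprocal binomial coefficient identity:
`(n+2)⁻¹ · (C(n+1,s)⁻¹ + C(n+1,s+1)⁻¹) = (n+1)⁻¹ · C(n,s)⁻¹` for `s ≤ n`. -/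
lemma choose_inv_coeff (n s : ℕ) (hs : s ≤ n) :
    ((n:ℝ)+2)⁻¹ * (((n+1).choose s : ℝ)⁻¹ + ((n+1).choose (s+1) : ℝ)⁻¹)
      = ((n:ℝ)+1)⁻¹ * ((n.choose s : ℝ))⁻¹ := by
  have h1 : ((s:ℝ)+1) * ((n+1).choose (s+1) : ℝ) = ((n:ℝ)+1) * (n.choose s : ℝ) := by
    have := Nat.add_one_mul_choose_eq n s
    exact_mod_cast (by linarith : (s+1) * ((n+1).choose (s+1)) = (n+1) * (n.choose s))
  have hc : ((n + 1 - s : ℕ) : ℝ) = (n:ℝ) + 1 - s := by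
    push_cast [Nat.cast_sub (by omega : s ≤ n + 1)]; ring
  have h2 : ((n:ℝ)+1-(s:ℝ)) * ((n+1).choose s : ℝ) = ((n:ℝ)+1) * (n.choose s : ℝ) := by
    have h := congrArg (fun k : ℕ => (k:ℝ)) (Nat.choose_mul_succ_eq n s)
    simp only [Nat.cast_mul] at h
    rw [hc] at h; push_cast at h; linarith
  have p1 : (0:ℝ) < (n.choose s : ℝ) := by exact_mod_cast Nat.choose_pos hs
  have p2 : (0:ℝ) < ((n+1).choose s : ℝ) := by exact_mod_cast Nat.choose_pos (by omega)
  have p3 : (0:ℝ) < ((n+1).choose (s+1) : ℝ) := by exact_mod_cast Nat.choose_pos (by omega)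
  field_simp
  nlinarith [h1, h2, p1, p2, p3]

/-- Exact discrete Shapley chain rule: the gap between the Shapley value of feature `i` in
the grand game and in the game with feature `j` removed is a weighted sum of second mixed
differences of the value function. -/
theorem shapley_chain_rule_exact {α : Type*} [DecidableEq α] (U : Finset α) (M : ℕ)
    (hM : U.card = M) (hM2 : 2 ≤ M) (v : Finset α → ℝ) (i j : α)
    (hi : i ∈ U) (hj : j ∈ U) (hij : i ≠ j) :
    shapley v U i - shapley v (U.erase j) i =
      (M : ℝ)⁻¹ * ∑ S ∈ ((U.erase i).erase j).powerset,
        ((M - 1).choose (S.card + 1) : ℝ)⁻¹ *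
          (v (insert i (insert j S)) - v (insert j S) - v (insert i S) + v S) := by
  obtain ⟨n, rfl⟩ : ∃ n, M = n + 2 := ⟨M - 2, by omega⟩
  have hji : j ∈ U.erase i := Finset.mem_erase.2 ⟨hij.symm, hj⟩
  set W : Finset α := (U.erase i).erase j with hW
  have hjW : j ∉ W := Finset.notMem_erase _ _
  have hins : insert j W = U.erase i := Finset.insert_erase hji
  have hone : n + 2 - 1 = n + 1 := rfl
  have htwo : n + 1 - 1 = n := rfl
  have hUj : (U.erase j).card = n + 1 := by
    rw [Finset.card_erase_of_mem hj, hM]; omega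
  have heq : (U.erase j).erase i = W := by rw [hW, Finset.erase_right_comm]
  have hWcard : W.card = n := by
    rw [hW, Finset.card_erase_of_mem hji, Finset.card_erase_of_mem hi, hM]; omega
  have hcard : ∀ S ∈ W.powerset, (insert j S).card = S.card + 1 := fun S hS =>
    Finset.card_insert_of_notMem fun h => hjW (Finset.mem_powerset.1 hS h)
  have e1 : shapley v U i = ((n+2 : ℕ) : ℝ)⁻¹ * ∑ S ∈ W.powerset,
      ((((n+1).choose S.card : ℝ)⁻¹ * (v (insert i S) - v S))
        + (((n+1).choose (S.card+1) : ℝ)⁻¹ * (v (insert i (insert j S)) - v (insert j S)))) := by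
    rw [shapley, hM, hone, ← hins, Finset.sum_powerset_insert hjW, ← Finset.sum_add_distrib]
    congr 1
    refine Finset.sum_congr rfl fun S hS => ?_
    rw [hcard S hS]
  have e2 : shapley v (U.erase j) i = ((n+1 : ℕ) : ℝ)⁻¹ * ∑ S ∈ W.powerset,
      ((n.choose S.card : ℝ)⁻¹ * (v (insert i S) - v S)) := by
    rw [shapley, hUj, htwo, heq]
  rw [e1, e2, Finset.mul_sum, Finset.mul_sum, Finset.mul_sum, ← Finset.sum_sub_distrib]
  refine Finset.sum_congr rfl fun S hS => ?_
  have hs : S.card ≤ n := hWcard ▸ Finset.card_le_card (Finset.mem_powerset.1 hS)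
  have key := choose_inv_coeff n S.card hs
  push_cast
  linear_combination (v (insert i S) - v S) * key
end

section
/- Discrete bound on the Shapley gap from bounded second mixed differences. Let U be a finite set with |U| = M ≥ 2, let v be a value function on subsets of U, let i ≠ j be elements of U, and let B ≥ 0. Suppose that for every subset S ⊆ U∖{i,j}, the second mixed difference satisfies |v(S ∪ {i,j}) − v(S ∪ {j}) − v(S ∪ {i}) + v(S)| ≤ B. Then |φ_i(v, U) − φ_i(v, U∖{j})| ≤ B/2. -/
/-!
Write `Δ_i S = v (S ∪ {i}) - v S`. Splitting the coalitions of `U ∖ {i}` according to whether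
they contain `j`, and using the recurrence `w_{n+1}(s) + w_{n+1}(s+1) = w_n(s)` of the Shapley
weights `w_n(s) = 1 / (n · C(n-1, s))`, the gap `φ_i(v, U) - φ_i(v, U ∖ {j})` becomes
`∑_{S ⊆ U ∖ {i,j}} w_{|U|}(|S|+1) (Δ_i (S ∪ {j}) - Δ_i S)`. The weights are nonnegative and add up
to `1/2` (the probability that `j` precedes `i` in a random ordering of `U`).
-/

open Finset

namespace Shapley

noncomputable def weight (n s : ℕ) : ℝ :=
  (n : ℝ)⁻¹ * ((n - 1).choose s : ℝ)⁻¹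

def mixedDiff {α : Type*} [DecidableEq α] (v : Finset α → ℝ) (i j : α) (S : Finset α) : ℝ :=
  v (insert i (insert j S)) - v (insert j S) - v (insert i S) + v S

lemma weight_nonneg (n s : ℕ) : 0 ≤ weight n s := by
  unfold weight; positivity

lemma weight_add_weight_succ {m s : ℕ} (hs : s ≤ m) :
    weight (m + 2) s + weight (m + 2) (s + 1) = weight (m + 1) s := by
  have hsucc : ((m : ℝ) + 1) * m.choose s = (m + 1).choose (s + 1) * ((s : ℝ) + 1) := by
    exact_mod_cast Nat.add_one_mul_choose_eq m s
  have hsame : (m.choose s : ℝ) * ((m : ℝ) + 1) = (m + 1).choose s * ((m : ℝ) - s + 1) := by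
    have h := Nat.choose_mul_succ_eq m s
    rw [show m + 1 - s = m - s + 1 by omega] at h
    have h' := congrArg (fun n : ℕ => (n : ℝ)) h
    push_cast [Nat.cast_sub hs] at h'
    exact h'
  have h0 : (0 : ℝ) < m.choose s := by exact_mod_cast Nat.choose_pos hs
  have h1 : (0 : ℝ) < (m + 1).choose s := by exact_mod_cast Nat.choose_pos (by omega)
  have h2 : (0 : ℝ) < (m + 1).choose (s + 1) := by exact_mod_cast Nat.choose_pos (by omega)
  simp only [weight, Nat.add_sub_cancel]
  push_cast
  field_simp
  linear_combination ((m + 1).choose (s + 1) : ℝ) * hsame + ((m + 1).choose s : ℝ) * hsucc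

lemma choose_mul_weight_succ {m k : ℕ} (hk : k ≤ m) :
    (m.choose k : ℝ) * weight (m + 2) (k + 1) =
      ((k : ℝ) + 1) / (((m : ℝ) + 1) * ((m : ℝ) + 2)) := by
  have hsucc : ((m : ℝ) + 1) * m.choose k = (m + 1).choose (k + 1) * ((k : ℝ) + 1) := by
    exact_mod_cast Nat.add_one_mul_choose_eq m k
  have h2 : (0 : ℝ) < (m + 1).choose (k + 1) := by exact_mod_cast Nat.choose_pos (by omega)
  simp only [weight]
  push_cast
  field_simp
  linear_combination hsucc

lemma sum_powerset_weight_succ {α : Type*} (A : Finset α) :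
    ∑ S ∈ A.powerset, weight (A.card + 2) (S.card + 1) = 1 / 2 := by
  set m := A.card
  have hgauss : ∑ k ∈ range (m + 1), ((k : ℝ) + 1) = ((m : ℝ) + 1) * ((m : ℝ) + 2) / 2 := by
    have h := Finset.sum_range_id_mul_two (m + 2)
    rw [Finset.sum_range_succ'] at h
    have h' : (∑ k ∈ range (m + 1), ((k : ℝ) + 1)) * 2 = ((m : ℝ) + 2) * ((m : ℝ) + 1) := by
      exact_mod_cast (by simpa using h)
    linarith
  rw [Finset.sum_powerset]
  calc ∑ k ∈ range (m + 1), ∑ S ∈ powersetCard k A, weight (m + 2) (S.card + 1)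
      = ∑ k ∈ range (m + 1), ((k : ℝ) + 1) / (((m : ℝ) + 1) * ((m : ℝ) + 2)) := by
        refine sum_congr rfl fun k hk => ?_
        rw [sum_congr rfl fun S hS => by rw [(mem_powersetCard.mp hS).2], sum_const,
          card_powersetCard, nsmul_eq_mul]
        exact choose_mul_weight_succ (Nat.lt_succ_iff.mp (mem_range.mp hk))
    _ = 1 / 2 := by
        rw [← sum_div, hgauss]
        field_simp

lemma shapley_eq_sum_weight {α : Type*} [DecidableEq α] (v : Finset α → ℝ) (T : Finset α)
    (i : α) : shapley v T i =
      ∑ S ∈ (T.erase i).powerset, weight T.card S.card * (v (insert i S) - v S) := by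
  simp only [shapley, weight, mul_sum, mul_assoc]

lemma card_erase_erase_add_two {α : Type*} [DecidableEq α] {T : Finset α} {i j : α}
    (hi : i ∈ T) (hj : j ∈ T) (hij : i ≠ j) : ((T.erase i).erase j).card + 2 = T.card := by
  rw [← card_erase_add_one hi, ← card_erase_add_one (mem_erase.mpr ⟨hij.symm, hj⟩)]

lemma shapley_sub_shapley_erase {α : Type*} [DecidableEq α] (v : Finset α → ℝ)
    {T : Finset α} {i j : α} (hi : i ∈ T) (hj : j ∈ T) (hij : i ≠ j) :
    shapley v T i - shapley v (T.erase j) i =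
      ∑ S ∈ ((T.erase i).erase j).powerset, weight T.card (S.card + 1) * mixedDiff v i j S := by
  set A := (T.erase i).erase j
  have hji : j ∈ T.erase i := mem_erase.mpr ⟨hij.symm, hj⟩
  have hjA : j ∉ A := notMem_erase j _
  have hcardT : T.card = A.card + 2 := (card_erase_erase_add_two hi hj hij).symm
  have hcardTj : (T.erase j).card = A.card + 1 := by rw [card_erase_of_mem hj]; omega
  have hTji : (T.erase j).erase i = A := erase_right_comm
  rw [shapley_eq_sum_weight, shapley_eq_sum_weight, hcardT, hcardTj, hTji,
    ← insert_erase hji, sum_powerset_insert hjA, ← sum_add_distrib, ← sum_sub_distrib]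
  refine sum_congr rfl fun S hS => ?_
  have hSA : S ⊆ A := mem_powerset.mp hS
  rw [card_insert_of_notMem fun h => hjA (hSA h),
    ← weight_add_weight_succ (card_le_card hSA), mixedDiff]
  ring

end Shapley

open Shapley in
theorem shapley_gap_bound_general {α : Type*} [DecidableEq α] (U : Finset α)
    (v : Finset α → ℝ) (i j : α)
    (hi : i ∈ U) (hj : j ∈ U) (hij : i ≠ j) (B : ℝ)
    (hbound : ∀ S ∈ ((U.erase i).erase j).powerset,
      |v (insert i (insert j S)) - v (insert j S) - v (insert i S) + v S| ≤ B) :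
    |shapley v U i - shapley v (U.erase j) i| ≤ B / 2 := by
  rw [shapley_sub_shapley_erase v hi hj hij]
  calc _ ≤ ∑ S ∈ ((U.erase i).erase j).powerset, |weight U.card (S.card + 1) * mixedDiff v i j S| :=
        abs_sum_le_sum_abs _ _
    _ ≤ ∑ S ∈ ((U.erase i).erase j).powerset, weight U.card (S.card + 1) * B := by
        refine sum_le_sum fun S hS => ?_
        rw [abs_mul, abs_of_nonneg (weight_nonneg _ _)]
        exact mul_le_mul_of_nonneg_left (hbound S hS) (weight_nonneg _ _)
    _ = B / 2 := by
        rw [← sum_mul, ← card_erase_erase_add_two hi hj hij, sum_powerset_weight_succ]; ring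

/-- Discrete bound on the Shapley gap: if every second mixed difference of the value
function with respect to features `i` and `j` is bounded by `B`, then the gap between
the Shapley value of `i` in the grand game and in the game without `j` is at most `B/2`. -/
theorem shapley_gap_bound {α : Type*} [DecidableEq α] (U : Finset α) (M : ℕ)
    (hM : U.card = M) (hM2 : 2 ≤ M) (v : Finset α → ℝ) (i j : α)
    (hi : i ∈ U) (hj : j ∈ U) (hij : i ≠ j) (B : ℝ) (hB : 0 ≤ B)
    (hbound : ∀ S ∈ ((U.erase i).erase j).powerset,
      |v (insert i (insert j S)) - v (insert j S) - v (insert i S) + v S| ≤ B) :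
    |shapley v U i - shapley v (U.erase j) i| ≤ B / 2 :=
  shapley_gap_bound_general U v i j hi hj hij B hbound
end
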